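/- arXiv:2102.08431 — 2 statements merged into one kernel-verified Lean document; each statement's English description precedes it below -/
import Mathlib

section
/- For purely imaginary eigenvalues λ = iu, real step size α, and purely imaginary momentum β (Re(β) = 0), the characteristic polynomial of the augmented dynamics block R with α = α'/u reduces to p(x) = |β|² − x|β|² − x²(iα' − 1) − x³. -/
open Complex Matrix

theorem charpoly_R_imaginary_beta (b u α' : ℝ) (hu : 0 < u) (x : ℂ) :
    (((!![(0 : ℂ), -b, -(I * u);
          b, 0, 0;
          0, -((α' / u) * b), 1 - (α' / u) * (I * u)]) :
        Matrix (Fin 3) (Fin 3) ℂ) - x • 1).det =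
      (b : ℂ) ^ 2 - x * (b : ℂ) ^ 2 - x ^ 2 * (I * α' - 1) - x ^ 3 := by
  have hu' : (u : ℂ) ≠ 0 := by exact_mod_cast hu.ne'
  simp [Matrix.det_fin_three, Matrix.sub_apply, Matrix.one_apply, Matrix.smul_apply]
  field_simp
  ring_nf
end

section
/- Let β ∈ ℂ with |β| = 0.9 and arg β = π/16, and let α' = 0.025. Then all roots of the cubic p(x) = x(β̄_r(iα' − 2) − |β|²) + x²(2β_r − iα' + 1) + |β|² − x³, where β_r = Re(β) = 0.9 cos(π/16), have modulus strictly less than 1. -/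
open Complex

/-!
The cubic is a perturbation of `(x - r₁)(x - r₂)(x - r₃)`, where the `rᵢ` are its roots rounded to
five decimals: the coefficients differ by less than `2·10⁻⁵` (given `Re β` to six digits through the
nested radical for `cos (π/16)`). For `‖x‖ = t ≥ 1` the product has modulus at least
`∏ (t - ‖rᵢ‖) ≥ (1 - 0.8617)(1 - 0.973)(1 - 0.9663) > 10⁻⁴`, while the perturbation is at most
`2·10⁻⁵ (1 + t + t²)`; the first wins, so no root lies outside the open unit disk.
-/

section ApproximateFactorization

variable {𝕜 : Type*} [NormedField 𝕜] {n : ℕ}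

theorem prod_sub_le_norm_prod_sub (x : 𝕜) (r : Fin n → 𝕜) {m : Fin n → ℝ}
    (hr : ∀ i, ‖r i‖ ≤ m i) (hx : ∀ i, m i ≤ ‖x‖) :
    ∏ i, (‖x‖ - m i) ≤ ‖∏ i, (x - r i)‖ := by
  rw [norm_prod]
  refine Finset.prod_le_prod (fun i _ => sub_nonneg.2 (hx i)) fun i _ => ?_
  linarith [hr i, norm_sub_norm_le x (r i)]

theorem norm_sum_mul_pow_le (x : 𝕜) {e : Fin n → 𝕜} {ε : ℝ} (he : ∀ k, ‖e k‖ ≤ ε) :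
    ‖∑ k, e k * x ^ (k : ℕ)‖ ≤ ε * ∑ k : Fin n, ‖x‖ ^ (k : ℕ) := by
  rw [Finset.mul_sum]
  refine (norm_sum_le _ _).trans (Finset.sum_le_sum fun k _ => ?_)
  rw [norm_mul, norm_pow]
  exact mul_le_mul_of_nonneg_right (he k) (by positivity)

theorem norm_lt_of_prod_sub_eq_sum {x : 𝕜} {ρ ε : ℝ} {r e : Fin n → 𝕜} {m : Fin n → ℝ}
    (hfac : ∏ i, (x - r i) = ∑ k, e k * x ^ (k : ℕ))
    (hr : ∀ i, ‖r i‖ ≤ m i) (hm : ∀ i, m i ≤ ρ) (he : ∀ k, ‖e k‖ ≤ ε)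
    (hgap : ∀ t, ρ ≤ t → ε * ∑ k : Fin n, t ^ (k : ℕ) < ∏ i, (t - m i)) :
    ‖x‖ < ρ := by
  by_contra! hρ
  have hlow := prod_sub_le_norm_prod_sub x r hr fun i => (hm i).trans hρ
  have hup := norm_sum_mul_pow_le x he
  rw [hfac] at hlow
  linarith [hgap _ hρ]

end ApproximateFactorization

theorem Real.sqrt_mem_Icc {x a b : ℝ} (ha : 0 ≤ a) (hb : 0 ≤ b)
    (hx : x ∈ Set.Icc (a ^ 2) (b ^ 2)) :
    √x ∈ Set.Icc a b :=
  ⟨(Real.le_sqrt ha ((sq_nonneg a).trans hx.1)).2 hx.1,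
    (Real.sqrt_le_left hb).2 hx.2⟩

theorem cos_pi_div_sixteen_mem_Icc : Real.cos (Real.pi / 16) ∈ Set.Icc 0.980785 0.980786 := by
  have h₁ : √2 ∈ Set.Icc 1.41421 1.41422 :=
    Real.sqrt_mem_Icc (by norm_num) (by norm_num) (by norm_num)
  have h₂ : √(2 + √2) ∈ Set.Icc 1.847758 1.847761 :=
    Real.sqrt_mem_Icc (by norm_num) (by norm_num) (by constructor <;> linarith [h₁.1, h₁.2])
  have h₃ : √(2 + √(2 + √2)) ∈ Set.Icc 1.96157 1.961572 :=
    Real.sqrt_mem_Icc (by norm_num) (by norm_num) (by constructor <;> linarith [h₂.1, h₂.2])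
  rw [Real.cos_pi_div_sixteen]
  constructor <;> linarith [h₃.1, h₃.2]

theorem Complex.norm_le_of_abs_re_le_of_abs_im_le {z : ℂ} {a c : ℝ} (hre : |z.re| ≤ a)
    (him : |z.im| ≤ c) :
    ‖z‖ ≤ a + c :=
  (norm_le_abs_re_add_abs_im z).trans (add_le_add hre him)

theorem Complex.norm_le_of_normSq_le {z : ℂ} {m : ℝ} (hm : 0 ≤ m) (h : normSq z ≤ m ^ 2) :
    ‖z‖ ≤ m :=
  (sq_le_sq₀ (norm_nonneg z) hm).1 (by rwa [Complex.sq_norm])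

theorem norm_lt_one_of_momentum_cubic_eq_zero {b : ℝ} {x : ℂ}
    (hb : b ∈ Set.Icc 0.8827065 0.8827074)
    (hx : x * (b * (I * 0.025 - 2) - 0.81) + x ^ 2 * (2 * b - I * 0.025 + 1) + 0.81 - x ^ 3 = 0) :
    ‖x‖ < 1 := by
  obtain ⟨hb₁, hb₂⟩ := hb
  set r₁ : ℂ := 0.83995 + 0.19201 * I
  set r₂ : ℂ := 0.97035 - 0.07067 * I
  set r₃ : ℂ := 0.95512 - 0.14634 * I
  set e₀ : ℂ := 0.81 - r₁ * r₂ * r₃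
  set e₁ : ℂ := b * (I * 0.025 - 2) - 0.81 + (r₁ * r₂ + r₁ * r₃ + r₂ * r₃)
  set e₂ : ℂ := 2 * b - I * 0.025 + 1 - (r₁ + r₂ + r₃)
  refine norm_lt_of_prod_sub_eq_sum (r := ![r₁, r₂, r₃]) (e := ![e₀, e₁, e₂])
    (m := ![0.8617, 0.973, 0.9663]) (ε := 2e-5) ?factorization ?roots ?radii ?errors ?gap
  case factorization =>
    simp only [Fin.prod_univ_three, Fin.sum_univ_three, Matrix.cons_val, Fin.val_zero, Fin.val_one,
      Fin.val_two]
    linear_combination (-1 : ℂ) * hx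
  case roots =>
    intro i
    fin_cases i <;>
      exact Complex.norm_le_of_normSq_le (by norm_num) (by norm_num [r₁, r₂, r₃, normSq_apply])
  case radii =>
    intro i
    fin_cases i <;> norm_num
  case errors =>
    intro k
    fin_cases k <;>
      refine (Complex.norm_le_of_abs_re_le_of_abs_im_le (a := 1.8e-5) (c := 2e-6) ?_ ?_).trans
        (by norm_num) <;>
      norm_num [e₀, e₁, e₂, r₁, r₂, r₃, abs_le] <;> constructor <;> linarith
  case gap =>
    intro t ht
    have hs : 0 ≤ t - 1 := by linarith
    simp only [Fin.prod_univ_three, Fin.sum_univ_three, Matrix.cons_val, Fin.val_zero, Fin.val_one,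
      Fin.val_two]
    nlinarith [pow_nonneg hs 3, pow_nonneg hs 2]

theorem almost_positive_momentum_roots (β : ℂ)
    (hmag : ‖β‖ = 0.9) (harg : Complex.arg β = Real.pi / 16) :
    ∀ x : ℂ,
      x * ((β.re : ℂ) * (I * (0.025 : ℂ) - 2) - (‖β‖ : ℂ) ^ 2)
          + x ^ 2 * (2 * (β.re : ℂ) - I * (0.025 : ℂ) + 1)
          + (‖β‖ : ℂ) ^ 2 - x ^ 3 = 0 →
        ‖x‖ < 1 := by
  have hre : β.re ∈ Set.Icc 0.8827065 0.8827074 := by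
    obtain ⟨hcos₁, hcos₂⟩ := cos_pi_div_sixteen_mem_Icc
    rw [← norm_mul_cos_arg, hmag, harg]
    constructor <;> linarith
  have hnorm_sq : (‖β‖ : ℂ) ^ 2 = 0.81 := by
    rw [hmag]
    norm_num
  intro x hx
  rw [hnorm_sq] at hx
  exact norm_lt_one_of_momentum_cubic_eq_zero hre hx
end
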